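/- arXiv:2305.18497 — 11 statements merged into one kernel-verified Lean document; each statement's English description precedes it below -/
import Mathlib

section
/- Let N ≥ 1, let ε > 0, and let (W_t)_{t≥1} be a sequence of row-stochastic N×N real matrices every entry of which is at least ε. For any initial N×m real matrix Ψ⁰, define Ψᵗ = W_t Ψᵗ⁻¹ for t ≥ 1. Then for every column index j and every pair of row indices i₁, i₂, the difference |Ψᵗ_{i₁ j} − Ψᵗ_{i₂ j}| tends to 0 as t → ∞; that is, all rows of Ψᵗ converge to agreement (consensus on predictions is reached). -/
/-- Consensus on predictions is reached: if all trust matrices are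
row-stochastic with entries bounded below by `ε > 0`, then the rows of
`Ψᵗ = Wₜ ⋯ W₁ Ψ⁰` converge to agreement. -/
theorem consensus_on_predictions
    (N m : ℕ) (hN : 1 ≤ N) (ε : ℝ) (hε : 0 < ε)
    (W : ℕ → Matrix (Fin N) (Fin N) ℝ)
    (hpos : ∀ t, 1 ≤ t → ∀ i j, ε ≤ W t i j)
    (hrow : ∀ t, 1 ≤ t → ∀ i, ∑ j, W t i j = 1)
    (Ψ : ℕ → Matrix (Fin N) (Fin m) ℝ)
    (hΨ : ∀ t, 1 ≤ t → Ψ t = W t * Ψ (t - 1)) :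
    ∀ (j : Fin m) (i₁ i₂ : Fin N),
      Filter.Tendsto (fun t => |Ψ t i₁ j - Ψ t i₂ j|) Filter.atTop (nhds 0) := by
  intro j i₁ i₂
  rcases eq_or_lt_of_le hN with h1 | h2
  · -- N = 1 : the two rows coincide
    have hsub : i₁ = i₂ := by
      subst h1
      exact Subsingleton.elim _ _
    simp [hsub]
  · -- N ≥ 2
    have : Nonempty (Fin N) := ⟨⟨0, by omega⟩⟩
    have hne : (Finset.univ : Finset (Fin N)).Nonempty := Finset.univ_nonempty
    have hNε : (N : ℝ) * ε ≤ 1 := by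
      have h := hrow 1 le_rfl ⟨0, by omega⟩
      calc (N : ℝ) * ε = ∑ _k : Fin N, ε := by
            simp [mul_comm]
        _ ≤ ∑ k, W 1 ⟨0, by omega⟩ k := Finset.sum_le_sum fun k _ => hpos 1 le_rfl _ k
        _ = 1 := h
    have h2ε : 2 * ε ≤ 1 := by
      have : (2 : ℝ) ≤ N := by exact_mod_cast h2
      nlinarith
    set q : ℝ := 1 - 2 * ε with hq
    have hq0 : 0 ≤ q := by linarith
    have hq1 : q < 1 := by simp [hq]; linarith
    set M : ℕ → ℝ := fun t => Finset.univ.sup' hne (fun i => Ψ t i j) with hM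
    set μ : ℕ → ℝ := fun t => Finset.univ.inf' hne (fun i => Ψ t i j) with hμ
    have hμM : ∀ t, μ t ≤ M t := fun t =>
      le_trans (Finset.inf'_le (fun i => Ψ t i j) (Finset.mem_univ i₁))
        (Finset.le_sup' (fun i => Ψ t i j) (Finset.mem_univ i₁))
    -- one-step contraction
    have step : ∀ t : ℕ, M (t + 1) - μ (t + 1) ≤ q * (M t - μ t) := by
      intro t
      have ht1 : 1 ≤ t + 1 := Nat.le_add_left 1 t
      have happ : ∀ a, Ψ (t + 1) a j = ∑ k, W (t + 1) a k * Ψ t k j := by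
        intro a
        rw [hΨ (t + 1) ht1]
        simp [Matrix.mul_apply]
      obtain ⟨k0, _, hk0⟩ := Finset.exists_mem_eq_inf' hne (fun i => Ψ t i j)
      obtain ⟨k1, _, hk1⟩ := Finset.exists_mem_eq_sup' hne (fun i => Ψ t i j)
      have hle : ∀ k, Ψ t k j ≤ M t := fun k => Finset.le_sup' (fun i => Ψ t i j) (Finset.mem_univ k)
      have hge : ∀ k, μ t ≤ Ψ t k j := fun k => Finset.inf'_le (fun i => Ψ t i j) (Finset.mem_univ k)
      have upper : ∀ a, Ψ (t + 1) a j ≤ M t - ε * (M t - μ t) := by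
        intro a
        have hsplit : ∑ k, W (t + 1) a k * Ψ t k j
            = W (t + 1) a k0 * Ψ t k0 j + ∑ k ∈ Finset.univ.erase k0, W (t + 1) a k * Ψ t k j :=
          (Finset.add_sum_erase _ _ (Finset.mem_univ k0)).symm
        have hsum : ∑ k ∈ Finset.univ.erase k0, W (t + 1) a k = 1 - W (t + 1) a k0 := by
          have := Finset.add_sum_erase Finset.univ (fun k => W (t + 1) a k) (Finset.mem_univ k0)
          have hr := hrow (t + 1) ht1 a
          linarith
        have hb : ∑ k ∈ Finset.univ.erase k0, W (t + 1) a k * Ψ t k j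
            ≤ ∑ k ∈ Finset.univ.erase k0, W (t + 1) a k * M t := by
          refine Finset.sum_le_sum fun k _ => ?_
          exact mul_le_mul_of_nonneg_left (hle k) (le_trans hε.le (hpos (t + 1) ht1 a k))
        have hwk0 : ε ≤ W (t + 1) a k0 := hpos (t + 1) ht1 a k0
        have hosc : 0 ≤ M t - μ t := by linarith [hμM t]
        rw [happ a, hsplit]
        have : ∑ k ∈ Finset.univ.erase k0, W (t + 1) a k * M t
            = (1 - W (t + 1) a k0) * M t := by rw [← Finset.sum_mul, hsum]
        rw [this] at hb
        have hx0 : Ψ t k0 j = μ t := hk0.symm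
        nlinarith [hb, hwk0, hosc]
      have lower : ∀ a, μ t + ε * (M t - μ t) ≤ Ψ (t + 1) a j := by
        intro a
        have hsplit : ∑ k, W (t + 1) a k * Ψ t k j
            = W (t + 1) a k1 * Ψ t k1 j + ∑ k ∈ Finset.univ.erase k1, W (t + 1) a k * Ψ t k j :=
          (Finset.add_sum_erase _ _ (Finset.mem_univ k1)).symm
        have hsum : ∑ k ∈ Finset.univ.erase k1, W (t + 1) a k = 1 - W (t + 1) a k1 := by
          have := Finset.add_sum_erase Finset.univ (fun k => W (t + 1) a k) (Finset.mem_univ k1)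
          have hr := hrow (t + 1) ht1 a
          linarith
        have hb : ∑ k ∈ Finset.univ.erase k1, W (t + 1) a k * μ t
            ≤ ∑ k ∈ Finset.univ.erase k1, W (t + 1) a k * Ψ t k j := by
          refine Finset.sum_le_sum fun k _ => ?_
          exact mul_le_mul_of_nonneg_left (hge k) (le_trans hε.le (hpos (t + 1) ht1 a k))
        have hwk1 : ε ≤ W (t + 1) a k1 := hpos (t + 1) ht1 a k1
        have hosc : 0 ≤ M t - μ t := by linarith [hμM t]
        rw [happ a, hsplit]
        have : ∑ k ∈ Finset.univ.erase k1, W (t + 1) a k * μ t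
            = (1 - W (t + 1) a k1) * μ t := by rw [← Finset.sum_mul, hsum]
        rw [this] at hb
        have hx1 : Ψ t k1 j = M t := hk1.symm
        nlinarith [hb, hwk1, hosc]
      have hMle : M (t + 1) ≤ M t - ε * (M t - μ t) :=
        Finset.sup'_le _ _ fun a _ => upper a
      have hμge : μ t + ε * (M t - μ t) ≤ μ (t + 1) :=
        Finset.le_inf' _ _ fun a _ => lower a
      simp only [hq]
      linarith
    -- iterate the contraction
    have osc_bound : ∀ t, M t - μ t ≤ q ^ t * (M 0 - μ 0) := by
      intro t
      induction t with
      | zero => simp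
      | succ n ih =>
        calc M (n + 1) - μ (n + 1) ≤ q * (M n - μ n) := step n
          _ ≤ q * (q ^ n * (M 0 - μ 0)) := mul_le_mul_of_nonneg_left ih hq0
          _ = q ^ (n + 1) * (M 0 - μ 0) := by ring
    -- squeeze
    have habs : ∀ t, |Ψ t i₁ j - Ψ t i₂ j| ≤ q ^ t * (M 0 - μ 0) := by
      intro t
      have h1 : Ψ t i₁ j ≤ M t := Finset.le_sup' (fun i => Ψ t i j) (Finset.mem_univ i₁)
      have h2 : Ψ t i₂ j ≤ M t := Finset.le_sup' (fun i => Ψ t i j) (Finset.mem_univ i₂)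
      have h3 : μ t ≤ Ψ t i₁ j := Finset.inf'_le (fun i => Ψ t i j) (Finset.mem_univ i₁)
      have h4 : μ t ≤ Ψ t i₂ j := Finset.inf'_le (fun i => Ψ t i j) (Finset.mem_univ i₂)
      have := osc_bound t
      rw [abs_sub_le_iff]
      constructor <;> linarith
    have htend : Filter.Tendsto (fun t => q ^ t * (M 0 - μ 0)) Filter.atTop (nhds 0) := by
      have := (tendsto_pow_atTop_nhds_zero_of_lt_one hq0 hq1).mul_const (M 0 - μ 0)
      simpa using this
    exact squeeze_zero (fun t => abs_nonneg _) habs htend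
end

section
/- Let W_1, …, W_t (t ≥ 1) be row-stochastic N×N real matrices. Then δ(W_t W_{t−1} ⋯ W_1) ≤ ∏_{i=1}^t λ(W_i), i.e. the row differences of the product are bounded by the product of the scrambling coefficients. -/
/-- Row differences `δ(W)`: the maximum over columns `j` and row pairs
`i₁, i₂` of `|W i₁ j − W i₂ j|`. -/
noncomputable def rowDiff {N : ℕ} (W : Matrix (Fin N) (Fin N) ℝ) : ℝ :=
  ⨆ j : Fin N, ⨆ i₁ : Fin N, ⨆ i₂ : Fin N, |W i₁ j - W i₂ j|

/-- Scrambling coefficient `λ(W) = 1 − min over row pairs of Σ_j min(W i₁ j, W i₂ j)`. -/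
noncomputable def scrambleCoef {N : ℕ} (W : Matrix (Fin N) (Fin N) ℝ) : ℝ :=
  1 - ⨅ i₁ : Fin N, ⨅ i₂ : Fin N, ∑ j : Fin N, min (W i₁ j) (W i₂ j)

/-- The backward product `W_t ⋯ W_1` (empty product is the identity). -/
def matProd {N : ℕ} (W : ℕ → Matrix (Fin N) (Fin N) ℝ) : ℕ → Matrix (Fin N) (Fin N) ℝ
  | 0 => 1
  | t + 1 => W (t + 1) * matProd W t

lemma rowDiff_nonneg {N : ℕ} (W : Matrix (Fin N) (Fin N) ℝ) : 0 ≤ rowDiff W :=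
  Real.iSup_nonneg fun _ => Real.iSup_nonneg fun _ => Real.iSup_nonneg fun _ => abs_nonneg _

lemma le_rowDiff {N : ℕ} (W : Matrix (Fin N) (Fin N) ℝ) (j i₁ i₂ : Fin N) :
    |W i₁ j - W i₂ j| ≤ rowDiff W := by
  have h2 : |W i₁ j - W i₂ j| ≤ ⨆ i₂' : Fin N, |W i₁ j - W i₂' j| :=
    le_ciSup (f := fun i₂' => |W i₁ j - W i₂' j|)
      (Set.Finite.bddAbove (Set.finite_range _)) i₂
  have h1 : (⨆ i₂' : Fin N, |W i₁ j - W i₂' j|) ≤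
      ⨆ i₁' : Fin N, ⨆ i₂' : Fin N, |W i₁' j - W i₂' j| :=
    le_ciSup (f := fun i₁' => ⨆ i₂' : Fin N, |W i₁' j - W i₂' j|)
      (Set.Finite.bddAbove (Set.finite_range _)) i₁
  have h0 : (⨆ i₁' : Fin N, ⨆ i₂' : Fin N, |W i₁' j - W i₂' j|) ≤ rowDiff W :=
    le_ciSup (f := fun j' => ⨆ i₁' : Fin N, ⨆ i₂' : Fin N, |W i₁' j' - W i₂' j'|)
      (Set.Finite.bddAbove (Set.finite_range _)) j
  exact h2.trans (h1.trans h0)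

lemma scrambleCoef_ge {N : ℕ} (W : Matrix (Fin N) (Fin N) ℝ)
    (hnn : ∀ i j, 0 ≤ W i j) (p q : Fin N) :
    1 - ∑ j, min (W p j) (W q j) ≤ scrambleCoef W := by
  unfold scrambleCoef
  have hbdd : ∀ i₁ : Fin N, BddBelow (Set.range fun i₂ => ∑ j, min (W i₁ j) (W i₂ j)) := by
    intro i₁
    refine ⟨0, ?_⟩
    rintro x ⟨i₂, rfl⟩
    exact Finset.sum_nonneg fun j _ => le_min (hnn i₁ j) (hnn i₂ j)
  have h2 : (⨅ i₂ : Fin N, ∑ j, min (W p j) (W i₂ j)) ≤ ∑ j, min (W p j) (W q j) :=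
    ciInf_le (hbdd p) q
  have h1 : (⨅ i₁ : Fin N, ⨅ i₂ : Fin N, ∑ j, min (W i₁ j) (W i₂ j)) ≤
      ⨅ i₂ : Fin N, ∑ j, min (W p j) (W i₂ j) := by
    refine ciInf_le ⟨0, ?_⟩ p
    rintro x ⟨i₁, rfl⟩
    exact Real.iInf_nonneg fun i₂ =>
      Finset.sum_nonneg fun j _ => le_min (hnn i₁ j) (hnn i₂ j)
  linarith [h1.trans h2]

lemma scrambleCoef_nonneg {N : ℕ} (W : Matrix (Fin N) (Fin N) ℝ)
    (hnn : ∀ i j, 0 ≤ W i j) (hr : ∀ i, ∑ j, W i j = 1) : 0 ≤ scrambleCoef W := by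
  rcases isEmpty_or_nonempty (Fin N) with hE | hN
  · unfold scrambleCoef
    rw [Real.iInf_of_isEmpty]
    norm_num
  · obtain ⟨i⟩ := hN
    have := scrambleCoef_ge W hnn i i
    simp only [min_self] at this
    rw [hr i] at this
    linarith

lemma key_step {N : ℕ} [Nonempty (Fin N)]
    (A P : Matrix (Fin N) (Fin N) ℝ)
    (hnn : ∀ i j, 0 ≤ A i j) (hr : ∀ i, ∑ j, A i j = 1) :
    rowDiff (A * P) ≤ scrambleCoef A * rowDiff P := by
  have hsub : ∀ (j p q : Fin N),
      ∑ k, (A p k - A q k) * P k j ≤ scrambleCoef A * rowDiff P := by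
    intro j p q
    obtain ⟨m, -, hm⟩ := Finset.exists_max_image Finset.univ (fun k => P k j)
      Finset.univ_nonempty
    obtain ⟨m', -, hm'⟩ := Finset.exists_min_image Finset.univ (fun k => P k j)
      Finset.univ_nonempty
    set S : ℝ := ∑ k, max (A p k - A q k) 0 with hS
    have hS0 : 0 ≤ S := Finset.sum_nonneg fun k _ => le_max_right _ _
    have hSneg : ∑ k, max (A q k - A p k) 0 = S := by
      have : S - ∑ k, max (A q k - A p k) 0 = 0 := by
        rw [hS, ← Finset.sum_sub_distrib]
        have : ∀ k : Fin N, max (A p k - A q k) 0 - max (A q k - A p k) 0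
            = A p k - A q k := by
          intro k
          rcases le_total (A p k) (A q k) with h | h
          · rw [max_eq_right (by linarith), max_eq_left (by linarith)]; ring
          · rw [max_eq_left (by linarith), max_eq_right (by linarith)]; ring
        rw [Finset.sum_congr rfl fun k _ => this k, Finset.sum_sub_distrib, hr, hr]
        ring
      linarith
    have hdecomp : ∀ k : Fin N, (A p k - A q k) * P k j
        = max (A p k - A q k) 0 * P k j - max (A q k - A p k) 0 * P k j := by
      intro k
      rcases le_total (A p k) (A q k) with h | h
      · rw [max_eq_right (by linarith), max_eq_left (by linarith)]; ring
      · rw [max_eq_left (by linarith), max_eq_right (by linarith)]; ring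
    have h1 : ∑ k, max (A p k - A q k) 0 * P k j ≤ S * P m j := by
      rw [hS, Finset.sum_mul]
      exact Finset.sum_le_sum fun k _ =>
        mul_le_mul_of_nonneg_left (hm k (Finset.mem_univ k)) (le_max_right _ _)
    have h2 : S * P m' j ≤ ∑ k, max (A q k - A p k) 0 * P k j := by
      rw [← hSneg, Finset.sum_mul]
      exact Finset.sum_le_sum fun k _ =>
        mul_le_mul_of_nonneg_left (hm' k (Finset.mem_univ k)) (le_max_right _ _)
    have hmd : P m j - P m' j ≤ rowDiff P :=
      (le_abs_self _).trans (le_rowDiff P j m m')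
    have hSle : S ≤ scrambleCoef A := by
      have hSeq : S = 1 - ∑ k, min (A p k) (A q k) := by
        have hterm : ∀ k : Fin N, max (A p k - A q k) 0
            = A p k - min (A p k) (A q k) := by
          intro k
          rcases le_total (A p k) (A q k) with h | h
          · rw [max_eq_right (by linarith), min_eq_left h]; ring
          · rw [max_eq_left (by linarith), min_eq_right h]
        rw [hS, Finset.sum_congr rfl fun k _ => hterm k, Finset.sum_sub_distrib, hr p]
      rw [hSeq]
      exact scrambleCoef_ge A hnn p q
    calc ∑ k, (A p k - A q k) * P k j
        = ∑ k, max (A p k - A q k) 0 * P k j - ∑ k, max (A q k - A p k) 0 * P k j := by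
          rw [← Finset.sum_sub_distrib]
          exact Finset.sum_congr rfl fun k _ => hdecomp k
      _ ≤ S * P m j - S * P m' j := by linarith
      _ = S * (P m j - P m' j) := by ring
      _ ≤ S * rowDiff P := mul_le_mul_of_nonneg_left hmd hS0
      _ ≤ scrambleCoef A * rowDiff P :=
          mul_le_mul_of_nonneg_right hSle (rowDiff_nonneg P)
  refine ciSup_le fun j => ciSup_le fun i₁ => ciSup_le fun i₂ => ?_
  have heq : (A * P) i₁ j - (A * P) i₂ j = ∑ k, (A i₁ k - A i₂ k) * P k j := by
    rw [Matrix.mul_apply, Matrix.mul_apply, ← Finset.sum_sub_distrib]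
    exact Finset.sum_congr rfl fun k _ => by ring
  rw [heq]
  refine abs_le.2 ⟨?_, hsub j i₁ i₂⟩
  have hneg : ∑ k, (A i₂ k - A i₁ k) * P k j = -∑ k, (A i₁ k - A i₂ k) * P k j := by
    rw [← Finset.sum_neg_distrib]
    exact Finset.sum_congr rfl fun k _ => by ring
  have := hsub j i₂ i₁
  rw [hneg] at this
  linarith

lemma rowDiff_one_le {N : ℕ} : rowDiff (1 : Matrix (Fin N) (Fin N) ℝ) ≤ 1 := by
  rcases isEmpty_or_nonempty (Fin N) with hE | hN
  · unfold rowDiff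
    rw [Real.iSup_of_isEmpty]
    norm_num
  · refine ciSup_le fun j => ciSup_le fun i₁ => ciSup_le fun i₂ => ?_
    simp only [Matrix.one_apply]
    split_ifs <;> norm_num

/-- `δ(W_t W_{t−1} ⋯ W_1) ≤ ∏_{i=1}^t λ(W_i)` for row-stochastic matrices. -/
theorem rowDiff_prod_le_prod_scrambleCoef
    (N : ℕ) (t : ℕ) (ht : 1 ≤ t)
    (W : ℕ → Matrix (Fin N) (Fin N) ℝ)
    (hnonneg : ∀ s ∈ Finset.Icc 1 t, ∀ i j, 0 ≤ W s i j)
    (hrow : ∀ s ∈ Finset.Icc 1 t, ∀ i, ∑ j, W s i j = 1) :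
    rowDiff (matProd W t) ≤ ∏ s ∈ Finset.Icc 1 t, scrambleCoef (W s) := by
  clear ht
  rcases isEmpty_or_nonempty (Fin N) with hE | hN
  · have h0 : rowDiff (matProd W t) = 0 := by
      unfold rowDiff
      rw [Real.iSup_of_isEmpty]
    rw [h0]
    refine Finset.prod_nonneg fun s hs => scrambleCoef_nonneg _ (hnonneg s hs) (hrow s hs)
  · induction t with
    | zero => simpa [matProd] using rowDiff_one_le
    | succ t ih =>
      have hsubset : Finset.Icc 1 t ⊆ Finset.Icc 1 (t + 1) :=
        Finset.Icc_subset_Icc_right (Nat.le_succ t)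
      have ih' := ih (fun s hs => hnonneg s (hsubset hs)) (fun s hs => hrow s (hsubset hs))
      have hmem : t + 1 ∈ Finset.Icc 1 (t + 1) := by
        simp [Finset.mem_Icc]
      have hstep : rowDiff (matProd W (t + 1)) ≤
          scrambleCoef (W (t + 1)) * rowDiff (matProd W t) :=
        key_step (W (t + 1)) (matProd W t) (hnonneg _ hmem) (hrow _ hmem)
      have hlam : 0 ≤ scrambleCoef (W (t + 1)) :=
        scrambleCoef_nonneg _ (hnonneg _ hmem) (hrow _ hmem)
      calc rowDiff (matProd W (t + 1))
          ≤ scrambleCoef (W (t + 1)) * rowDiff (matProd W t) := hstep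
        _ ≤ scrambleCoef (W (t + 1)) * ∏ s ∈ Finset.Icc 1 t, scrambleCoef (W s) :=
            mul_le_mul_of_nonneg_left ih' hlam
        _ = ∏ s ∈ Finset.Icc 1 (t + 1), scrambleCoef (W s) := by
            rw [Finset.prod_Icc_succ_top (Nat.succ_le_succ (Nat.zero_le t)), mul_comm]
end

section
/- Let A and B be row-stochastic N×N real matrices with all entries strictly positive, and fix an index j. Suppose that for each M ∈ {A, B}: (i) column j has the strictly lowest column sum, i.e. Σ_i M_{it} > Σ_i M_{ij} for every t ≠ j; and (ii) the (i,j) entry is the strictly lowest entry of row i for every i ≠ j, i.e. M_{it} > M_{ij} for every i ≠ j and every t ≠ j. Then the product C = A·B also has strictly lowest column sum in column j: Σ_i C_{it} > Σ_i C_{ij} for every t ≠ j. -/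
/-- if both `A` and `B` are positive row-stochastic matrices in
which column `j` has the strictly lowest column sum and, in every row `i ≠ j`,
the `(i,j)` entry is the strictly lowest entry of the row, then column `j` has
the strictly lowest column sum in the product `C = A·B`. -/
theorem lowest_column_sum_preserved_under_mul
    (N : ℕ) (A B : Matrix (Fin N) (Fin N) ℝ) (j : Fin N)
    (hApos : ∀ i k, 0 < A i k) (hArow : ∀ i, ∑ k, A i k = 1)
    (hBpos : ∀ i k, 0 < B i k) (hBrow : ∀ i, ∑ k, B i k = 1)
    (hAcol : ∀ t, t ≠ j → ∑ i, A i j < ∑ i, A i t)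
    (hBcol : ∀ t, t ≠ j → ∑ i, B i j < ∑ i, B i t)
    (hArowmin : ∀ i, i ≠ j → ∀ t, t ≠ j → A i j < A i t)
    (hBrowmin : ∀ i, i ≠ j → ∀ t, t ≠ j → B i j < B i t) :
    ∀ t, t ≠ j → ∑ i, (A * B) i j < ∑ i, (A * B) i t := by
  intro t ht
  set f : Fin N → ℝ := fun k => ∑ i, A i k with hf
  have key : ∀ u, ∑ i, (A * B) i u = ∑ k, f k * B k u := by
    intro u
    simp only [Matrix.mul_apply]
    rw [Finset.sum_comm]
    simp [hf, Finset.sum_mul]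
  rw [key, key]
  have h1 : 0 < f j := Finset.sum_pos (fun i _ => hApos i j) ⟨j, Finset.mem_univ j⟩
  have h2 : ∑ k, B k j < ∑ k, B k t := hBcol t ht
  have h3 : 0 ≤ ∑ k, (f k - f j) * (B k t - B k j) := by
    apply Finset.sum_nonneg
    intro k _
    rcases eq_or_ne k j with rfl | hk
    · simp
    · have := hAcol k hk
      have := hBrowmin k hk t ht
      nlinarith
  have expand : ∑ k, (f k - f j) * (B k t - B k j)
      = (∑ k, f k * B k t) - (∑ k, f k * B k j)
        - f j * ((∑ k, B k t) - (∑ k, B k j)) := by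
    simp only [sub_mul, mul_sub, Finset.sum_sub_distrib, Finset.mul_sum]
    ring
  nlinarith [mul_pos h1 (sub_pos.2 h2)]
end

section
/- Let A and B be row-stochastic N×N real matrices with all entries strictly positive, and fix an index j. Suppose that for each M ∈ {A, B}: (i) column j has the strictly lowest column sum, i.e. Σ_i M_{it} > Σ_i M_{ij} for every t ≠ j; and (ii) the (i,j) entry is the strictly lowest entry of row i for every i ≠ j, i.e. M_{it} > M_{ij} for every i ≠ j and every t ≠ j. Then in the product C = A·B, the (i,j) entry remains the strictly lowest entry of row i for every i ≠ j: C_{it} > C_{ij} for every i ≠ j and every t ≠ j. -/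
/-- if both `A` and `B` are positive row-stochastic matrices in
which column `j` has the strictly lowest column sum and, in every row `i ≠ j`,
the `(i,j)` entry is the strictly lowest entry of the row, then in the product
`C = A·B` the `(i,j)` entry remains the strictly lowest entry of row `i` for
every `i ≠ j`. -/
theorem lowest_row_entry_preserved_under_mul
    (N : ℕ) (A B : Matrix (Fin N) (Fin N) ℝ) (j : Fin N)
    (hApos : ∀ i k, 0 < A i k) (hArow : ∀ i, ∑ k, A i k = 1)
    (hBpos : ∀ i k, 0 < B i k) (hBrow : ∀ i, ∑ k, B i k = 1)
    (hAcol : ∀ t, t ≠ j → ∑ i, A i j < ∑ i, A i t)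
    (hBcol : ∀ t, t ≠ j → ∑ i, B i j < ∑ i, B i t)
    (hArowmin : ∀ i, i ≠ j → ∀ t, t ≠ j → A i j < A i t)
    (hBrowmin : ∀ i, i ≠ j → ∀ t, t ≠ j → B i j < B i t) :
    ∀ i, i ≠ j → ∀ t, t ≠ j → (A * B) i j < (A * B) i t := by
  intro i hi t ht
  have hdiff : (A * B) i t - (A * B) i j = ∑ k, A i k * (B k t - B k j) := by
    simp [Matrix.mul_apply, mul_sub, Finset.sum_sub_distrib]
  have hstep : ∑ k, A i j * (B k t - B k j) < ∑ k, A i k * (B k t - B k j) := by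
    apply Finset.sum_lt_sum
    · intro k _
      rcases eq_or_ne k j with rfl | hk
      · exact le_refl _
      · exact le_of_lt (mul_lt_mul_of_pos_right (hArowmin i hi k hk)
          (sub_pos.mpr (hBrowmin k hk t ht)))
    · exact ⟨t, Finset.mem_univ t, mul_lt_mul_of_pos_right (hArowmin i hi t ht)
        (sub_pos.mpr (hBrowmin t ht t ht))⟩
  have hsum : (0:ℝ) < ∑ k, A i j * (B k t - B k j) := by
    rw [← Finset.mul_sum, Finset.sum_sub_distrib]
    exact mul_pos (hApos i j) (sub_pos.mpr (hBcol t ht))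
  linarith
end

section
/- Fix an index b and let W_1, …, W_τ (τ ≥ 1) be row-stochastic N×N real matrices with all entries strictly positive such that each W_s satisfies: (1) the (i,b) entry is the strictly lowest entry of row i for every i ≠ b, i.e. (W_s)_{it} > (W_s)_{ib} for every i ≠ b and t ≠ b; and (2) column b has the strictly lowest column sum, i.e. Σ_i (W_s)_{it} > Σ_i (W_s)_{ib} for every t ≠ b. Let P = W_τ W_{τ−1} ⋯ W_1 and define the consensus importance weights π_j = (1/N) Σ_i P_{ij}. Then node b has the strictly lowest importance in the consensus: π_b < π_j for every j ≠ b. -/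
/-- "Good" matrices: positive, row-min at `b` in rows `≠ b`, strictly lowest
column sum at `b`. -/
def GoodMat {N : ℕ} (b : Fin N) (M : Matrix (Fin N) (Fin N) ℝ) : Prop :=
  (∀ i k, 0 < M i k) ∧ (∀ i, i ≠ b → ∀ t, t ≠ b → M i b < M i t) ∧
    (∀ t, t ≠ b → ∑ i, M i b < ∑ i, M i t)

lemma key_pos {N : ℕ} (b : Fin N) (w d : Fin N → ℝ) (hwb : 0 < w b)
    (hw : ∀ k, k ≠ b → w b < w k) (hd : ∀ k, k ≠ b → 0 < d k)
    (hsum : 0 < ∑ k, d k) (j : Fin N) (hj : j ≠ b) : 0 < ∑ k, w k * d k := by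
  have h1 : ∑ k, w b * d k < ∑ k, w k * d k := by
    apply Finset.sum_lt_sum
    · intro k _
      rcases eq_or_ne k b with rfl | hk
      · exact le_refl _
      · exact le_of_lt (mul_lt_mul_of_pos_right (hw k hk) (hd k hk))
    · exact ⟨j, Finset.mem_univ j, mul_lt_mul_of_pos_right (hw j hj) (hd j hj)⟩
  calc (0:ℝ) < w b * ∑ k, d k := mul_pos hwb hsum
    _ = ∑ k, w b * d k := Finset.mul_sum _ _ _
    _ < _ := h1

lemma good_mul {N : ℕ} (b j0 : Fin N) (hj0 : j0 ≠ b)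
    (A B : Matrix (Fin N) (Fin N) ℝ) (hA : GoodMat b A) (hB : GoodMat b B) :
    GoodMat b (A * B) := by
  haveI : Nonempty (Fin N) := ⟨b⟩
  have hcolsum : ∀ (j : Fin N), ∑ i, (A * B) i j = ∑ k, (∑ i, A i k) * B k j := by
    intro j
    simp only [Matrix.mul_apply, Finset.sum_mul]
    exact Finset.sum_comm
  obtain ⟨hApos, hArmin, hAcmin⟩ := hA
  obtain ⟨hBpos, hBrmin, hBcmin⟩ := hB
  have hsumd : ∀ t, t ≠ b → 0 < ∑ k, (B k t - B k b) := by
    intro t ht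
    rw [Finset.sum_sub_distrib, sub_pos]
    exact hBcmin t ht
  refine ⟨?_, ?_, ?_⟩
  · intro i k
    rw [Matrix.mul_apply]
    exact Finset.sum_pos (fun l _ => mul_pos (hApos i l) (hBpos l k)) Finset.univ_nonempty
  · intro i hi t ht
    rw [← sub_pos]
    have : (A * B) i t - (A * B) i b = ∑ k, A i k * (B k t - B k b) := by
      simp [Matrix.mul_apply, mul_sub, Finset.sum_sub_distrib]
    rw [this]
    exact key_pos b (A i) _ (hApos i b) (fun k hk => hArmin i hi k hk)
      (fun k hk => sub_pos.mpr (hBrmin k hk t ht)) (hsumd t ht) j0 hj0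
  · intro t ht
    rw [← sub_pos]
    have : (∑ i, (A * B) i t) - ∑ i, (A * B) i b
        = ∑ k, (∑ i, A i k) * (B k t - B k b) := by
      rw [hcolsum t, hcolsum b]
      simp [mul_sub, Finset.sum_sub_distrib]
    rw [this]
    exact key_pos b (fun k => ∑ i, A i k) _
      (Finset.sum_pos (fun i _ => hApos i b) Finset.univ_nonempty)
      (fun k hk => hAcmin k hk)
      (fun k hk => sub_pos.mpr (hBrmin k hk t ht)) (hsumd t ht) j0 hj0

/-- if every trust matrix `W_1, …, W_τ` is positive,
row-stochastic, gives node `b` the strictly lowest trust in every row `i ≠ b`,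
and has strictly lowest column sum in column `b`, then node `b` has the
strictly lowest importance `π_j = (1/N) Σ_i P i j` in the consensus, where
`P = W_τ ⋯ W_1`. -/
theorem low_quality_node_lowest_importance
    (N : ℕ) (b : Fin N) (τ : ℕ) (hτ : 1 ≤ τ)
    (W : ℕ → Matrix (Fin N) (Fin N) ℝ)
    (hpos : ∀ s ∈ Finset.Icc 1 τ, ∀ i k, 0 < W s i k)
    (hrow : ∀ s ∈ Finset.Icc 1 τ, ∀ i, ∑ k, W s i k = 1)
    (hrowmin : ∀ s ∈ Finset.Icc 1 τ, ∀ i, i ≠ b → ∀ t, t ≠ b → W s i b < W s i t)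
    (hcolmin : ∀ s ∈ Finset.Icc 1 τ, ∀ t, t ≠ b → ∑ i, W s i b < ∑ i, W s i t) :
    ∀ j, j ≠ b →
      (1 / (N : ℝ)) * ∑ i, matProd W τ i b < (1 / (N : ℝ)) * ∑ i, matProd W τ i j := by
  intro j hj
  have hN : (0:ℝ) < 1 / N := by
    have : 0 < N := Fin.pos b
    positivity
  have hWgood : ∀ s ∈ Finset.Icc 1 τ, GoodMat b (W s) := fun s hs =>
    ⟨hpos s hs, hrowmin s hs, hcolmin s hs⟩
  have main : ∀ t, 1 ≤ t → t ≤ τ → GoodMat b (matProd W t) := by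
    intro t
    induction t with
    | zero => intro h; omega
    | succ n ih =>
      intro _ hle
      have hmem : n + 1 ∈ Finset.Icc 1 τ := Finset.mem_Icc.mpr ⟨by omega, hle⟩
      rcases Nat.eq_zero_or_pos n with rfl | hn
      · have : matProd W 1 = W 1 := by
          show W 1 * matProd W 0 = W 1
          show W 1 * 1 = W 1
          rw [mul_one]
        rw [this]
        exact hWgood 1 hmem
      · exact good_mul b j hj _ _ (hWgood _ hmem) (ih hn (by omega))
  exact mul_lt_mul_of_pos_left ((main τ hτ le_rfl).2.2 j hj) hN
end

section
/- Fix an index b and let W be a row-stochastic N×N real matrix with all entries strictly positive such that: (1) W_{it} > W_{ib} for every i ≠ b and every t ≠ b (the (i,b) entry is the strictly lowest entry of row i for i ≠ b); and (2) Σ_i W_{it} > Σ_i W_{ib} for every t ≠ b (column b has the strictly lowest column sum). Then any probability vector π with πW = π (i.e. Σ_i π_i W_{ij} = π_j for all j) satisfies π_b ≤ π_j for every j; that is, node b has the lowest weight in the stationary (consensus) distribution. -/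
/-- if a positive row-stochastic matrix `W` gives node `b` the
strictly lowest trust in every row `i ≠ b` and column `b` has the strictly
lowest column sum, then any stationary probability vector `π` of `W` gives `b`
the lowest weight: `π b ≤ π j` for every `j`. -/
theorem stationary_lowest_weight_on_b
    (N : ℕ) (b : Fin N) (W : Matrix (Fin N) (Fin N) ℝ)
    (hpos : ∀ i k, 0 < W i k) (hrow : ∀ i, ∑ k, W i k = 1)
    (hrowmin : ∀ i, i ≠ b → ∀ t, t ≠ b → W i b < W i t)
    (hcolmin : ∀ t, t ≠ b → ∑ i, W i b < ∑ i, W i t)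
    (π : Fin N → ℝ)
    (hπnonneg : ∀ i, 0 ≤ π i) (hπsum : ∑ i, π i = 1)
    (hπstat : ∀ j, ∑ i, π i * W i j = π j) :
    ∀ j, π b ≤ π j := by
  intro j
  obtain ⟨m, -, hm⟩ := Finset.exists_min_image Finset.univ π ⟨b, Finset.mem_univ b⟩
  have hmj : π m ≤ π j := hm j (Finset.mem_univ j)
  suffices h : π b ≤ π m by linarith
  by_contra hlt
  push_neg at hlt
  have hπlt : π m < π b := hlt
  have hmb : m ≠ b := by
    intro h; rw [h] at hπlt; exact lt_irrefl _ hπlt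
  -- column sums
  have hS : ∑ i, W i b < ∑ i, W i m := hcolmin m hmb
  have hπm0 : 0 ≤ π m := hπnonneg m
  -- main identity
  have h1 : ∑ i, π i * (W i m - W i b) = π m - π b := by
    have := hπstat m
    have := hπstat b
    simp only [mul_sub, Finset.sum_sub_distrib]
    linarith
  have h3 : ∑ i, π i * (W i m - W i b)
      = π b * (W b m - W b b) + ∑ i ∈ Finset.univ.erase b, π i * (W i m - W i b) :=
    (Finset.add_sum_erase _ _ (Finset.mem_univ b)).symm
  have h4 : ∑ i ∈ Finset.univ.erase b, π m * (W i m - W i b)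
      ≤ ∑ i ∈ Finset.univ.erase b, π i * (W i m - W i b) := by
    apply Finset.sum_le_sum
    intro i hi
    have hib : i ≠ b := Finset.ne_of_mem_erase hi
    have hcoef : 0 ≤ W i m - W i b := le_of_lt (sub_pos.2 (hrowmin i hib m hmb))
    exact mul_le_mul_of_nonneg_right (hm i (Finset.mem_univ i)) hcoef
  have h5 : ∑ i ∈ Finset.univ.erase b, π m * (W i m - W i b)
      = π m * ((∑ i, W i m) - W b m - ((∑ i, W i b) - W b b)) := by
    rw [← Finset.mul_sum]
    congr 1
    rw [Finset.sum_sub_distrib,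
      Finset.sum_erase_eq_sub (Finset.mem_univ b),
      Finset.sum_erase_eq_sub (Finset.mem_univ b)]
  -- W b b + W b m ≤ 1
  have hsub : ({b, m} : Finset (Fin N)) ⊆ Finset.univ := Finset.subset_univ _
  have hpair : W b b + W b m ≤ ∑ k, W b k := by
    have := Finset.sum_le_sum_of_subset_of_nonneg hsub
      (fun k _ _ => le_of_lt (hpos b k))
    rwa [Finset.sum_pair (Ne.symm hmb)] at this
  rw [hrow b] at hpair
  have hWbm : 0 < W b m := hpos b m
  -- combine
  have hmain : π m - π b ≥ π b * (W b m - W b b)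
      + π m * ((∑ i, W i m) - W b m - ((∑ i, W i b) - W b b)) := by
    rw [← h1, h3, ← h5]
    linarith
  have hcolnonneg : 0 ≤ π m * ((∑ i, W i m) - (∑ i, W i b)) :=
    mul_nonneg hπm0 (le_of_lt (sub_pos.2 hS))
  have hprod : 0 < (π b - π m) * (W b m - W b b + 1) :=
    mul_pos (sub_pos.2 hπlt) (by linarith)
  nlinarith [hmain, hcolnonneg, hprod]
end

section
/- Let the index set {1,…,N} be partitioned into two nonempty disjoint sets R (regular nodes) and B (low-quality nodes). Let W and V be row-stochastic N×N real matrices with all entries strictly positive, each satisfying: (C1) Σ_i M_{ir} > Σ_i M_{ib} for every r ∈ R and b ∈ B; (C2) Σ_{n∈R} (M_{nr} − M_{nb}) > M_{bb} − M_{br} for every r ∈ R and b ∈ B; and (C3) M_{nr} ≥ M_{nb} for every r ∈ R, b ∈ B, and n ≠ b. Then the product C = W·V satisfies (C1): Σ_i C_{ir} > Σ_i C_{ib} for every r ∈ R and b ∈ B. -/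
/-- for a partition of the nodes into regular nodes `R` and
low-quality nodes `B`, if the positive row-stochastic matrices `W` and `V` each
satisfy conditions (C1)–(C3), then the product `C = W·V` satisfies (C1):
every regular column sum strictly exceeds every low-quality column sum. -/
theorem condition_C1_preserved_under_mul
    (N : ℕ) (R B : Finset (Fin N))
    (hRne : R.Nonempty) (hBne : B.Nonempty)
    (hdisj : Disjoint R B) (hcover : R ∪ B = Finset.univ)
    (W V : Matrix (Fin N) (Fin N) ℝ)
    (hWpos : ∀ i k, 0 < W i k) (hWrow : ∀ i, ∑ k, W i k = 1)
    (hVpos : ∀ i k, 0 < V i k) (hVrow : ∀ i, ∑ k, V i k = 1)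
    (hWC1 : ∀ r ∈ R, ∀ b ∈ B, ∑ i, W i b < ∑ i, W i r)
    (hVC1 : ∀ r ∈ R, ∀ b ∈ B, ∑ i, V i b < ∑ i, V i r)
    (hWC2 : ∀ r ∈ R, ∀ b ∈ B, W b b - W b r < ∑ n ∈ R, (W n r - W n b))
    (hVC2 : ∀ r ∈ R, ∀ b ∈ B, V b b - V b r < ∑ n ∈ R, (V n r - V n b))
    (hWC3 : ∀ r ∈ R, ∀ b ∈ B, ∀ n, n ≠ b → W n b ≤ W n r)
    (hVC3 : ∀ r ∈ R, ∀ b ∈ B, ∀ n, n ≠ b → V n b ≤ V n r) :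
    ∀ r ∈ R, ∀ b ∈ B, ∑ i, (W * V) i b < ∑ i, (W * V) i r := by
  intro r hr b hb
  have hne : Nonempty (Fin N) := ⟨r⟩
  set S : Fin N → ℝ := fun k => ∑ i, W i k with hS
  set d : Fin N → ℝ := fun k => V k r - V k b with hd
  have key : ∀ j, ∑ i, (W * V) i j = ∑ k, S k * V k j := by
    intro j
    simp only [Matrix.mul_apply]
    rw [Finset.sum_comm]
    simp [hS, Finset.sum_mul]
  rw [key, key, ← sub_pos, ← Finset.sum_sub_distrib]
  have hgoal : ∑ k, (S k * V k r - S k * V k b) = ∑ k, S k * d k := by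
    apply Finset.sum_congr rfl
    intro k _
    simp [hd]; ring
  rw [hgoal, ← hcover, Finset.sum_union hdisj]
  have hSbpos : 0 < S b := Finset.sum_pos (fun i _ => hWpos i b) Finset.univ_nonempty
  have hdnn : ∀ k, k ≠ b → 0 ≤ d k := fun k hk => sub_nonneg.mpr (hVC3 r hr b hb k hk)
  have h1 : ∑ k ∈ R, S b * d k ≤ ∑ k ∈ R, S k * d k := by
    apply Finset.sum_le_sum
    intro k hk
    have hkb : k ≠ b := fun h => Finset.disjoint_left.mp hdisj hk (h ▸ hb)
    exact mul_le_mul_of_nonneg_right (le_of_lt (hWC1 k hk b hb)) (hdnn k hkb)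
  have h2 : ∑ k ∈ B.erase b, S k * d k + S b * d b = ∑ k ∈ B, S k * d k :=
    Finset.sum_erase_add B _ hb
  have h3 : 0 ≤ ∑ k ∈ B.erase b, S k * d k := by
    apply Finset.sum_nonneg
    intro k hk
    exact mul_nonneg (le_of_lt (Finset.sum_pos (fun i _ => hWpos i k) Finset.univ_nonempty))
      (hdnn k (Finset.ne_of_mem_erase hk))
  have h4 : 0 < ∑ k ∈ R, d k + d b := by
    have := hVC2 r hr b hb
    have hsum : ∑ n ∈ R, (V n r - V n b) = ∑ k ∈ R, d k := rfl
    simp only [hd]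
    linarith
  have h5 : ∑ k ∈ R, S b * d k = S b * ∑ k ∈ R, d k := by rw [Finset.mul_sum]
  nlinarith [mul_pos hSbpos h4]
end

section
/- Let the index set {1,…,N} be partitioned into two nonempty disjoint sets R (regular nodes) and B (low-quality nodes). Let W and V be row-stochastic N×N real matrices with all entries strictly positive, each satisfying: (C1) Σ_i M_{ir} > Σ_i M_{ib} for every r ∈ R and b ∈ B; (C2) Σ_{n∈R} (M_{nr} − M_{nb}) > M_{bb} − M_{br} for every r ∈ R and b ∈ B; and (C3) M_{nr} ≥ M_{nb} for every r ∈ R, b ∈ B, and n ≠ b. Then the product C = W·V satisfies (C2): Σ_{n∈R} (C_{nr} − C_{nb}) > C_{bb} − C_{br} for every r ∈ R and b ∈ B. -/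
/-- for a partition of the nodes into regular nodes `R` and
low-quality nodes `B`, if the positive row-stochastic matrices `W` and `V` each
satisfy conditions (C1)–(C3), then the product `C = W·V` satisfies (C2). -/
theorem condition_C2_preserved_under_mul
    (N : ℕ) (R B : Finset (Fin N))
    (hRne : R.Nonempty) (hBne : B.Nonempty)
    (hdisj : Disjoint R B) (hcover : R ∪ B = Finset.univ)
    (W V : Matrix (Fin N) (Fin N) ℝ)
    (hWpos : ∀ i k, 0 < W i k) (hWrow : ∀ i, ∑ k, W i k = 1)
    (hVpos : ∀ i k, 0 < V i k) (hVrow : ∀ i, ∑ k, V i k = 1)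
    (hWC1 : ∀ r ∈ R, ∀ b ∈ B, ∑ i, W i b < ∑ i, W i r)
    (hVC1 : ∀ r ∈ R, ∀ b ∈ B, ∑ i, V i b < ∑ i, V i r)
    (hWC2 : ∀ r ∈ R, ∀ b ∈ B, W b b - W b r < ∑ n ∈ R, (W n r - W n b))
    (hVC2 : ∀ r ∈ R, ∀ b ∈ B, V b b - V b r < ∑ n ∈ R, (V n r - V n b))
    (hWC3 : ∀ r ∈ R, ∀ b ∈ B, ∀ n, n ≠ b → W n b ≤ W n r)
    (hVC3 : ∀ r ∈ R, ∀ b ∈ B, ∀ n, n ≠ b → V n b ≤ V n r) :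
    ∀ r ∈ R, ∀ b ∈ B,
      (W * V) b b - (W * V) b r < ∑ n ∈ R, ((W * V) n r - (W * V) n b) := by
  intro r hr b hb
  set d : Fin N → ℝ := fun k => V k r - V k b with hd
  set a : Fin N → ℝ := fun k => (∑ n ∈ R, W n k) + W b k with ha
  -- rewrite each row difference
  have h1 : ∀ n, (W * V) n r - (W * V) n b = ∑ k, W n k * d k := by
    intro n
    simp only [Matrix.mul_apply, hd, ← Finset.sum_sub_distrib, mul_sub]
  have h2 : ∑ n ∈ R, ((W * V) n r - (W * V) n b)
      = ∑ k, (∑ n ∈ R, W n k) * d k := by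
    simp only [h1]
    rw [Finset.sum_comm]
    simp [Finset.sum_mul]
  have h3 : (W * V) b r - (W * V) b b = ∑ k, W b k * d k := h1 b
  -- combine into ∑ k, a k * d k
  have hQ : ∑ n ∈ R, ((W * V) n r - (W * V) n b) + ((W * V) b r - (W * V) b b)
      = ∑ k, a k * d k := by
    rw [h2, h3, ← Finset.sum_add_distrib]
    refine Finset.sum_congr rfl fun k _ => ?_
    simp only [ha]; ring
  -- split the sum over R ∪ B
  have hsplit : ∑ k, a k * d k
      = ∑ k ∈ R, a k * d k + ∑ k ∈ B, a k * d k := by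
    rw [← Finset.sum_union hdisj, hcover]
  have hbB : b ∈ B := hb
  have hBsplit : ∑ k ∈ B, a k * d k = a b * d b + ∑ k ∈ B.erase b, a k * d k :=
    (Finset.add_sum_erase B (fun k => a k * d k) hbB).symm
  -- positivity / sign facts
  have hab_pos : 0 < a b := by
    have : (0:ℝ) ≤ ∑ n ∈ R, W n b :=
      Finset.sum_nonneg fun n _ => (hWpos n b).le
    have := hWpos b b
    simp only [ha]; linarith
  have hd_nonneg : ∀ k, k ≠ b → 0 ≤ d k := fun k hk =>
    sub_nonneg.mpr (hVC3 r hr b hb k hk)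
  have hRne_b : ∀ k ∈ R, k ≠ b := fun k hk => by
    intro h; exact (Finset.disjoint_left.mp hdisj hk) (h ▸ hb)
  have ha_ge : ∀ k ∈ R, a b ≤ a k := by
    intro k hk
    have h2 := hWC2 k hk b hb
    rw [Finset.sum_sub_distrib] at h2
    simp only [ha]; linarith
  have hR_lb : ∑ k ∈ R, a b * d k ≤ ∑ k ∈ R, a k * d k := by
    refine Finset.sum_le_sum fun k hk => ?_
    exact mul_le_mul_of_nonneg_right (ha_ge k hk) (hd_nonneg k (hRne_b k hk))
  have hErase_nonneg : 0 ≤ ∑ k ∈ B.erase b, a k * d k := by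
    refine Finset.sum_nonneg fun k hk => ?_
    have hkb : k ≠ b := Finset.ne_of_mem_erase hk
    have hak : 0 < a k := by
      have : (0:ℝ) ≤ ∑ n ∈ R, W n k :=
        Finset.sum_nonneg fun n _ => (hWpos n k).le
      have := hWpos b k
      simp only [ha]; linarith
    exact mul_nonneg hak.le (hd_nonneg k hkb)
  have hVsum : 0 < ∑ k ∈ R, d k + d b := by
    have h2 := hVC2 r hr b hb
    rw [Finset.sum_sub_distrib] at h2
    have : ∑ k ∈ R, d k = ∑ n ∈ R, V n r - ∑ n ∈ R, V n b := by
      simp [hd, Finset.sum_sub_distrib]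
    simp only [hd] at *
    linarith
  have hkey : 0 < ∑ k, a k * d k := by
    have hmul : 0 < a b * (∑ k ∈ R, d k + d b) := mul_pos hab_pos hVsum
    rw [hsplit, hBsplit]
    have : a b * (∑ k ∈ R, d k) = ∑ k ∈ R, a b * d k := Finset.mul_sum ..
    nlinarith [hR_lb, hErase_nonneg]
  linarith [hQ ▸ hkey]
end

section
/- Let the index set {1,…,N} be partitioned into two nonempty disjoint sets R (regular nodes) and B (low-quality nodes). Let W and V be row-stochastic N×N real matrices with all entries strictly positive, each satisfying: (C1) Σ_i M_{ir} > Σ_i M_{ib} for every r ∈ R and b ∈ B; (C2) Σ_{n∈R} (M_{nr} − M_{nb}) > M_{bb} − M_{br} for every r ∈ R and b ∈ B; and (C3) M_{nr} ≥ M_{nb} for every r ∈ R, b ∈ B, and n ≠ b. Then the product C = W·V satisfies (C3): C_{nr} ≥ C_{nb} for every r ∈ R, b ∈ B, and n ≠ b. -/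
/-- for a partition of the nodes into regular nodes `R` and
low-quality nodes `B`, if the positive row-stochastic matrices `W` and `V` each
satisfy conditions (C1)–(C3), then the product `C = W·V` satisfies (C3). -/
theorem condition_C3_preserved_under_mul
    (N : ℕ) (R B : Finset (Fin N))
    (hRne : R.Nonempty) (hBne : B.Nonempty)
    (hdisj : Disjoint R B) (hcover : R ∪ B = Finset.univ)
    (W V : Matrix (Fin N) (Fin N) ℝ)
    (hWpos : ∀ i k, 0 < W i k) (hWrow : ∀ i, ∑ k, W i k = 1)
    (hVpos : ∀ i k, 0 < V i k) (hVrow : ∀ i, ∑ k, V i k = 1)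
    (hWC1 : ∀ r ∈ R, ∀ b ∈ B, ∑ i, W i b < ∑ i, W i r)
    (hVC1 : ∀ r ∈ R, ∀ b ∈ B, ∑ i, V i b < ∑ i, V i r)
    (hWC2 : ∀ r ∈ R, ∀ b ∈ B, W b b - W b r < ∑ n ∈ R, (W n r - W n b))
    (hVC2 : ∀ r ∈ R, ∀ b ∈ B, V b b - V b r < ∑ n ∈ R, (V n r - V n b))
    (hWC3 : ∀ r ∈ R, ∀ b ∈ B, ∀ n, n ≠ b → W n b ≤ W n r)
    (hVC3 : ∀ r ∈ R, ∀ b ∈ B, ∀ n, n ≠ b → V n b ≤ V n r) :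
    ∀ r ∈ R, ∀ b ∈ B, ∀ n, n ≠ b → (W * V) n b ≤ (W * V) n r := by
  intro r hr b hb n hn
  have hbR : b ∉ R := fun h => (Finset.disjoint_left.mp hdisj h) hb
  have key : 0 ≤ ∑ k, W n k * (V k r - V k b) := by
    have hsub : insert b R ⊆ Finset.univ := Finset.subset_univ _
    rw [← Finset.sum_sdiff hsub]
    have h1 : 0 ≤ ∑ k ∈ Finset.univ \ insert b R, W n k * (V k r - V k b) := by
      apply Finset.sum_nonneg
      intro k hk
      have hkb : k ≠ b := by
        intro h; subst h
        exact (Finset.mem_sdiff.mp hk).2 (Finset.mem_insert_self _ _)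
      exact mul_nonneg (hWpos n k).le (sub_nonneg.mpr (hVC3 r hr b hb k hkb))
    have h2 : 0 ≤ ∑ k ∈ insert b R, W n k * (V k r - V k b) := by
      rw [Finset.sum_insert hbR]
      have h3 : ∑ m ∈ R, W n b * (V m r - V m b) ≤
          ∑ m ∈ R, W n m * (V m r - V m b) := by
        apply Finset.sum_le_sum
        intro m hm
        have hVnn : 0 ≤ V m r - V m b := by
          have hmb : m ≠ b := fun h => hbR (h ▸ hm)
          exact sub_nonneg.mpr (hVC3 r hr b hb m hmb)
        exact mul_le_mul_of_nonneg_right (hWC3 m hm b hb n hn) hVnn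
      have h4 : W n b * (V b b - V b r) ≤ W n b * ∑ m ∈ R, (V m r - V m b) :=
        mul_le_mul_of_nonneg_left (hVC2 r hr b hb).le (hWpos n b).le
      rw [Finset.mul_sum] at h4
      nlinarith [h3, h4]
    linarith
  have heq : (W * V) n r - (W * V) n b = ∑ k, W n k * (V k r - V k b) := by
    simp [Matrix.mul_apply, mul_sub, Finset.sum_sub_distrib]
  linarith
end

section
/- Let the index set {1,…,N} be partitioned into two nonempty disjoint sets R (regular nodes) and B (low-quality nodes), and let W_1, …, W_τ (τ ≥ 1) be row-stochastic N×N real matrices with all entries strictly positive, each satisfying: (C1) Σ_i M_{ir} > Σ_i M_{ib} for every r ∈ R and b ∈ B; (C2) Σ_{n∈R} (M_{nr} − M_{nb}) > M_{bb} − M_{br} for every r ∈ R and b ∈ B; and (C3) M_{nr} ≥ M_{nb} for every r ∈ R, b ∈ B, and n ≠ b. Then the product P = W_τ W_{τ−1} ⋯ W_1 satisfies Σ_i P_{ib} < Σ_i P_{ir} for every b ∈ B and r ∈ R; consequently every low-quality node in B has strictly lower consensus importance π_j = (1/N) Σ_i P_{ij} than every regular node in R. -/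
lemma prod_step {N : ℕ} {R B : Finset (Fin N)} (hdisj : Disjoint R B)
    {M P : Matrix (Fin N) (Fin N) ℝ}
    (hMpos : ∀ i k, 0 < M i k)
    (hMC2 : ∀ r ∈ R, ∀ b ∈ B, M b b - M b r < ∑ n ∈ R, (M n r - M n b))
    (hMC3 : ∀ r ∈ R, ∀ b ∈ B, ∀ n, n ≠ b → M n b ≤ M n r)
    (hQ1 : ∀ r ∈ R, ∀ b ∈ B, ∀ n, n ≠ b → P n b ≤ P n r)
    (hQ2 : ∀ r ∈ R, ∀ b ∈ B, P b b - P b r < ∑ n ∈ R, (P n r - P n b)) :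
    (∀ r ∈ R, ∀ b ∈ B, ∀ n, n ≠ b → (M * P) n b ≤ (M * P) n r) ∧
    (∀ r ∈ R, ∀ b ∈ B, (M * P) b b - (M * P) b r < ∑ n ∈ R, ((M * P) n r - (M * P) n b)) := by
  have hD : ∀ (n r b : Fin N), (M * P) n r - (M * P) n b
      = ∑ k, M n k * (P k r - P k b) := by
    intro n r b
    simp [Matrix.mul_apply, mul_sub, Finset.sum_sub_distrib]
  constructor
  · intro r hr b hb n hn
    have hbR : b ∉ R := fun h => (Finset.disjoint_left.mp hdisj h hb).elim
    have hDk : ∀ k ∈ R, 0 ≤ P k r - P k b := by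
      intro k hk
      have : k ≠ b := fun h => hbR (h ▸ hk)
      have := hQ1 r hr b hb k this
      linarith
    -- sum over erase b bound
    have hsub : R ⊆ Finset.univ.erase b := by
      intro k hk
      exact Finset.mem_erase.mpr ⟨fun h => hbR (h ▸ hk), Finset.mem_univ k⟩
    have h2 : ∑ k ∈ R, M n k * (P k r - P k b)
        ≤ ∑ k ∈ Finset.univ.erase b, M n k * (P k r - P k b) := by
      apply Finset.sum_le_sum_of_subset_of_nonneg hsub
      intro k _ hk
      have hkb : k ≠ b := (Finset.mem_erase.mp ‹k ∈ Finset.univ.erase b›).1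
      have := hQ1 r hr b hb k hkb
      have := (hMpos n k).le
      nlinarith
    have h1 : ∑ k ∈ R, M n b * (P k r - P k b) ≤ ∑ k ∈ R, M n k * (P k r - P k b) := by
      apply Finset.sum_le_sum
      intro k hk
      have hkb : k ≠ b := fun h => hbR (h ▸ hk)
      have := hMC3 k hk b hb n hn
      have := hDk k hk
      nlinarith
    have h3 : M n b * (P b r - P b b) + ∑ k ∈ Finset.univ.erase b, M n k * (P k r - P k b)
        = ∑ k, M n k * (P k r - P k b) :=
      Finset.add_sum_erase _ (fun k => M n k * (P k r - P k b)) (Finset.mem_univ b)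
    have hsum : ∑ k ∈ R, M n b * (P k r - P k b) = M n b * ∑ k ∈ R, (P k r - P k b) :=
      (Finset.mul_sum _ _ _).symm
    have hpos0 : 0 < (P b r - P b b) + ∑ k ∈ R, (P k r - P k b) := by
      have := hQ2 r hr b hb; linarith
    have hMnb := hMpos n b
    have : 0 ≤ (M * P) n r - (M * P) n b := by
      rw [hD]
      nlinarith [mul_pos hMnb hpos0]
    linarith
  · intro r hr b hb
    have hbR : b ∉ R := fun h => (Finset.disjoint_left.mp hdisj h hb).elim
    set S : Finset (Fin N) := insert b R with hS
    have hgoal : (0 < ∑ n ∈ S, ((M * P) n r - (M * P) n b)) →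
        (M * P) b b - (M * P) b r < ∑ n ∈ R, ((M * P) n r - (M * P) n b) := by
      rw [hS, Finset.sum_insert hbR]
      intro h; linarith
    apply hgoal
    have hswap : ∑ n ∈ S, ((M * P) n r - (M * P) n b)
        = ∑ k, (∑ n ∈ S, M n k) * (P k r - P k b) := by
      simp only [hD]
      rw [Finset.sum_comm]
      congr 1; funext k
      rw [Finset.sum_mul]
    rw [hswap]
    set c : Fin N → ℝ := fun k => ∑ n ∈ S, M n k with hc
    have hcpos : ∀ k, 0 < c k := by
      intro k
      apply Finset.sum_pos (fun n _ => hMpos n k)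
      exact ⟨b, Finset.mem_insert_self b R⟩
    have hcb : ∀ k ∈ R, c b < c k := by
      intro k hk
      have h2 := hMC2 k hk b hb
      simp only [hc, hS, Finset.sum_insert hbR]
      rw [Finset.sum_sub_distrib] at h2
      linarith
    have hDk : ∀ k, k ≠ b → 0 ≤ P k r - P k b := by
      intro k hk
      have := hQ1 r hr b hb k hk; linarith
    have h3 : c b * (P b r - P b b) + ∑ k ∈ Finset.univ.erase b, c k * (P k r - P k b)
        = ∑ k, c k * (P k r - P k b) :=
      Finset.add_sum_erase _ (fun k => c k * (P k r - P k b)) (Finset.mem_univ b)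
    have hsub : R ⊆ Finset.univ.erase b := by
      intro k hk
      exact Finset.mem_erase.mpr ⟨fun h => hbR (h ▸ hk), Finset.mem_univ k⟩
    have h2 : ∑ k ∈ R, c k * (P k r - P k b)
        ≤ ∑ k ∈ Finset.univ.erase b, c k * (P k r - P k b) := by
      apply Finset.sum_le_sum_of_subset_of_nonneg hsub
      intro k _ hk
      have hkb : k ≠ b := (Finset.mem_erase.mp ‹k ∈ Finset.univ.erase b›).1
      exact mul_nonneg (hcpos k).le (hDk k hkb)
    have h1 : ∑ k ∈ R, c b * (P k r - P k b) ≤ ∑ k ∈ R, c k * (P k r - P k b) := by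
      apply Finset.sum_le_sum
      intro k hk
      have hkb : k ≠ b := fun h => hbR (h ▸ hk)
      have := hcb k hk
      have := hDk k hkb
      nlinarith
    have hsum : ∑ k ∈ R, c b * (P k r - P k b) = c b * ∑ k ∈ R, (P k r - P k b) :=
      (Finset.mul_sum _ _ _).symm
    have hpos0 : 0 < (P b r - P b b) + ∑ k ∈ R, (P k r - P k b) := by
      have := hQ2 r hr b hb; linarith
    nlinarith [mul_pos (hcpos b) hpos0]

/-- for a partition of the nodes into regular nodes `R` and
low-quality nodes `B`, if positive row-stochastic trust matrices `W_1, …, W_τ`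
each satisfy conditions (C1)–(C3), then in the product `P = W_τ ⋯ W_1` every
low-quality column sum is strictly smaller than every regular column sum;
consequently every low-quality node has strictly lower consensus importance
`π_j = (1/N) Σ_i P i j` than every regular node. -/
theorem low_quality_nodes_lower_importance
    (N : ℕ) (R B : Finset (Fin N))
    (hRne : R.Nonempty) (hBne : B.Nonempty)
    (hdisj : Disjoint R B) (hcover : R ∪ B = Finset.univ)
    (τ : ℕ) (hτ : 1 ≤ τ)
    (W : ℕ → Matrix (Fin N) (Fin N) ℝ)
    (hpos : ∀ s ∈ Finset.Icc 1 τ, ∀ i k, 0 < W s i k)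
    (hrow : ∀ s ∈ Finset.Icc 1 τ, ∀ i, ∑ k, W s i k = 1)
    (hC1 : ∀ s ∈ Finset.Icc 1 τ, ∀ r ∈ R, ∀ b ∈ B, ∑ i, W s i b < ∑ i, W s i r)
    (hC2 : ∀ s ∈ Finset.Icc 1 τ, ∀ r ∈ R, ∀ b ∈ B,
      W s b b - W s b r < ∑ n ∈ R, (W s n r - W s n b))
    (hC3 : ∀ s ∈ Finset.Icc 1 τ, ∀ r ∈ R, ∀ b ∈ B, ∀ n, n ≠ b → W s n b ≤ W s n r) :
    ∀ b ∈ B, ∀ r ∈ R,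
      (∑ i, matProd W τ i b < ∑ i, matProd W τ i r) ∧
      (1 / (N : ℝ)) * ∑ i, matProd W τ i b < (1 / (N : ℝ)) * ∑ i, matProd W τ i r := by
  -- invariants Q1, Q2 for matProd W t, 1 ≤ t ≤ τ
  have key : ∀ t, 1 ≤ t → t ≤ τ →
      (∀ r ∈ R, ∀ b ∈ B, ∀ n, n ≠ b → matProd W t n b ≤ matProd W t n r) ∧
      (∀ r ∈ R, ∀ b ∈ B, matProd W t b b - matProd W t b r
        < ∑ n ∈ R, (matProd W t n r - matProd W t n b)) := by
    intro t h1
    induction t, h1 using Nat.le_induction with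
    | base =>
      intro h1τ
      have hmem : 1 ∈ Finset.Icc 1 τ := Finset.mem_Icc.mpr ⟨le_refl 1, h1τ⟩
      have heq : matProd W 1 = W 1 := by
        show W 1 * matProd W 0 = W 1
        show W 1 * 1 = W 1
        exact Matrix.mul_one _
      rw [heq]
      exact ⟨fun r hr b hb n hn => hC3 1 hmem r hr b hb n hn,
             fun r hr b hb => hC2 1 hmem r hr b hb⟩
    | succ t ht IH =>
      intro hsucc
      have htτ : t ≤ τ := le_trans (Nat.le_succ t) hsucc
      obtain ⟨hQ1, hQ2⟩ := IH htτ
      have hmem : t + 1 ∈ Finset.Icc 1 τ := Finset.mem_Icc.mpr ⟨Nat.le_add_left 1 t, hsucc⟩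
      have heq : matProd W (t + 1) = W (t + 1) * matProd W t := rfl
      rw [heq]
      exact prod_step hdisj (hpos (t + 1) hmem) (hC2 (t + 1) hmem) (hC3 (t + 1) hmem) hQ1 hQ2
  obtain ⟨hQ1, hQ2⟩ := key τ hτ (le_refl τ)
  intro b hb r hr
  have hbR : b ∉ R := fun h => (Finset.disjoint_left.mp hdisj h hb).elim
  set P := matProd W τ with hP
  have hcol : ∑ i, P i b < ∑ i, P i r := by
    have hpos0 : 0 < (P b r - P b b) + ∑ k ∈ R, (P k r - P k b) := by
      have := hQ2 r hr b hb; linarith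
    have hsplit : ∑ i ∈ insert b R, (P i r - P i b)
        + ∑ i ∈ (insert b R)ᶜ, (P i r - P i b) = ∑ i, (P i r - P i b) :=
      Finset.sum_add_sum_compl _ _
    have h1 : ∑ i ∈ insert b R, (P i r - P i b)
        = (P b r - P b b) + ∑ k ∈ R, (P k r - P k b) := Finset.sum_insert hbR
    have h2 : 0 ≤ ∑ i ∈ (insert b R)ᶜ, (P i r - P i b) := by
      apply Finset.sum_nonneg
      intro i hi
      have hib : i ≠ b := by
        intro h
        exact (Finset.mem_compl.mp hi) (h ▸ Finset.mem_insert_self b R)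
      have := hQ1 r hr b hb i hib
      linarith
    have : 0 < ∑ i, (P i r - P i b) := by
      rw [← hsplit, h1]; linarith
    rw [Finset.sum_sub_distrib] at this
    linarith
  refine ⟨hcol, ?_⟩
  have hN : 0 < (N : ℝ) := by
    obtain ⟨r0, _⟩ := hRne
    exact_mod_cast r0.pos
  exact mul_lt_mul_of_pos_left hcol (by positivity)
end

section
/- Let N ≥ 1, let a_1,…,a_N and b_1,…,b_N be strictly positive real numbers, let c₁ > c₂ > 0, and fix an index k. If a_k / (Σ_i a_i) < b_k / (Σ_i b_i), then (c₁·a_k + c₂·b_k) / (Σ_i (c₁·a_i + c₂·b_i)) < (a_k + b_k) / (Σ_i (a_i + b_i)); that is, up-weighting the first family by c₁ and down-weighting the second by c₂ strictly decreases the normalized weight assigned to index k. -/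
/-- the key inequality behind the confidence (entropy) weighting
block: if `a_k / Σ a < b_k / Σ b` and `c₁ > c₂ > 0`, then re-weighting by
`c₁, c₂` strictly decreases the normalized weight of index `k`. -/
theorem confidence_weighting_downweights
    (N : ℕ) (hN : 1 ≤ N) (a b : Fin N → ℝ)
    (ha : ∀ i, 0 < a i) (hb : ∀ i, 0 < b i)
    (c₁ c₂ : ℝ) (hc₂ : 0 < c₂) (hc : c₂ < c₁)
    (k : Fin N)
    (hk : a k / (∑ i, a i) < b k / (∑ i, b i)) :
    (c₁ * a k + c₂ * b k) / (∑ i, (c₁ * a i + c₂ * b i)) <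
      (a k + b k) / (∑ i, (a i + b i)) := by
  have hne : Nonempty (Fin N) := Fin.pos_iff_nonempty.mp hN
  have hA : 0 < ∑ i, a i := Finset.sum_pos (fun i _ => ha i) Finset.univ_nonempty
  have hB : 0 < ∑ i, b i := Finset.sum_pos (fun i _ => hb i) Finset.univ_nonempty
  have hsum : ∑ i, (c₁ * a i + c₂ * b i) = c₁ * ∑ i, a i + c₂ * ∑ i, b i := by
    simp [Finset.sum_add_distrib, Finset.mul_sum]
  have hsum2 : ∑ i, (a i + b i) = (∑ i, a i) + ∑ i, b i := by
    simp [Finset.sum_add_distrib]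
  rw [hsum, hsum2]
  rw [div_lt_div_iff₀ hA hB] at hk
  have hc₁ : 0 < c₁ := hc₂.trans hc
  rw [div_lt_div_iff₀ (by positivity) (by positivity)]
  nlinarith [mul_pos (sub_pos.mpr hc) (sub_pos.mpr hk)]
end
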